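/- Let n ∈ ℤ_{≥0}^r with n_j ≥ 1 for every j, and assume n and n − e_1,…,n − e_r are all normal. If β_n ≠ 0, then for every j = 1,…,r one has β_n (Φ_n(z) − z Φ_{n−e_j}(z)) = Φ*_{n−e_j}(z) − Σ_{k=1}^r ρ_{n,k} Φ*_{n−e_k}(z); equivalently, with R_n the r×r matrix whose (j,k) entry is ρ_{n,k} and A_n = (1/β_n)(I − R_n), the column vector with entries Φ_n − zΦ_{n−e_j} equals A_n applied to the column vector with entries Φ*_{n−e_j}. -/

import Mathlib

open MeasureTheory Polynomial

noncomputable section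

/-- A system of measures on the unit circle: each `μ j` is a probability measure,
carried by the unit circle `∂𝔻 = {z : |z| = 1}`, with infinite support. -/
def MopucSystem {r : ℕ} (μ : Fin r → Measure ℂ) : Prop :=
  ∀ j, IsProbabilityMeasure (μ j) ∧ μ j ((Metric.sphere (0 : ℂ) 1)ᶜ) = 0 ∧
    ∀ s : Set ℂ, s.Finite → μ j (sᶜ) ≠ 0

/-- The inner product `⟨P, Q⟩_μ = ∫ P(z)·conj (Q(z)) dμ(z)`. -/
def pip (μ : Measure ℂ) (P Q : Polynomial ℂ) : ℂ :=
  ∫ z, P.eval z * (starRingEnd ℂ) (Q.eval z) ∂μ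

/-- `⟨P, z^p⟩_μ`. -/
def mip (μ : Measure ℂ) (P : Polynomial ℂ) (p : ℕ) : ℂ :=
  pip μ P (X ^ p)

/-- The moment `ν^p = ∫ z^p dμ(z)` for `p ∈ ℤ` (on the circle `z^{-m} = conj (z^m)`). -/
def mom (μ : Measure ℂ) (p : ℤ) : ℂ :=
  ∫ z, z ^ p ∂μ

/-- The linear position of the pair `(j, q)` (with `q < n j`): `(∑_{i<j} n i) + q`.
This enumerates the pairs, in lexicographic order, by `0, 1, …, |n| − 1`. -/
def linIdx {r : ℕ} (n : Fin r → ℕ) (c : (j : Fin r) × Fin (n j)) : ℕ :=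
  (∑ i ∈ Finset.univ.filter (fun i => i < c.1), n i) + (c.2 : ℕ)

/-- The moment matrix `M_n`: rows are indexed by pairs `(j, q)` with `1 ≤ j ≤ r`,
`0 ≤ q ≤ n j − 1`, columns by `p = 0, …, |n| − 1` (realized as pairs via the
order-preserving enumeration `linIdx`), and the entry at `((j,q), p)` is `ν_j^{p−q}`. -/
def Mmat {r : ℕ} (μ : Fin r → Measure ℂ) (n : Fin r → ℕ) :
    Matrix ((j : Fin r) × Fin (n j)) ((j : Fin r) × Fin (n j)) ℂ :=
  Matrix.of fun rq c => mom (μ rq.1) ((linIdx n c : ℤ) - ((rq.2 : ℕ) : ℤ))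

/-- The index `n` is normal if `det M_n ≠ 0`.  (For `n = 0` the matrix is empty and its
determinant is `1`, so `n = 0` is normal, matching the convention of the paper.) -/
def NormalIndex {r : ℕ} (μ : Fin r → Measure ℂ) (n : Fin r → ℕ) : Prop :=
  (Mmat μ n).det ≠ 0

/-- A type II multiple orthogonal polynomial for the multi-index `n`. -/
def IsTypeII {r : ℕ} (μ : Fin r → Measure ℂ) (n : Fin r → ℕ) (P : Polynomial ℂ) : Prop :=
  P ≠ 0 ∧ P.degree ≤ ((∑ j, n j : ℕ) : WithBot ℕ) ∧
    ∀ j, ∀ p : ℕ, p < n j → mip (μ j) P p = 0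

/-- A type II* multiple orthogonal polynomial for the multi-index `n`. -/
def IsTypeIIStar {r : ℕ} (μ : Fin r → Measure ℂ) (n : Fin r → ℕ) (P : Polynomial ℂ) : Prop :=
  P ≠ 0 ∧ P.degree ≤ ((∑ j, n j : ℕ) : WithBot ℕ) ∧
    ∀ j, ∀ p : ℕ, 1 ≤ p → p ≤ n j → mip (μ j) P p = 0

/-- A type I multiple orthogonal polynomial for the multi-index `n`:
a nonzero vector of polynomials with `deg (L j) ≤ n j − 1` (so `L j = 0` when `n j = 0`),
and `∑_j ⟨L j, z^p⟩_j = 0` for `p = 0, …, |n| − 2`. -/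
def IsTypeI {r : ℕ} (μ : Fin r → Measure ℂ) (n : Fin r → ℕ) (L : Fin r → Polynomial ℂ) : Prop :=
  L ≠ 0 ∧ (∀ j, (L j).degree < ((n j : ℕ) : WithBot ℕ)) ∧
    ∀ p : ℕ, p + 2 ≤ ∑ j, n j → ∑ j, mip (μ j) (L j) p = 0

/-- A type I* multiple orthogonal polynomial for the multi-index `n`:
a nonzero vector of polynomials with `deg (L j) ≤ n j − 1`,
and `∑_j ⟨L j, z^p⟩_j = 0` for `p = 1, …, |n| − 1`. -/
def IsTypeIStar {r : ℕ} (μ : Fin r → Measure ℂ) (n : Fin r → ℕ) (L : Fin r → Polynomial ℂ) : Prop :=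
  L ≠ 0 ∧ (∀ j, (L j).degree < ((n j : ℕ) : WithBot ℕ)) ∧
    ∀ p : ℕ, 1 ≤ p → p + 1 ≤ ∑ j, n j → ∑ j, mip (μ j) (L j) p = 0

/-- `Φ_n`: the monic type II polynomial of degree exactly `|n|`. -/
def IsPhi {r : ℕ} (μ : Fin r → Measure ℂ) (n : Fin r → ℕ) (P : Polynomial ℂ) : Prop :=
  IsTypeII μ n P ∧ P.Monic ∧ P.natDegree = ∑ j, n j

/-- `Φ*_n`: the type II* polynomial with `Φ*_n(0) = 1`. -/
def IsPhiStar {r : ℕ} (μ : Fin r → Measure ℂ) (n : Fin r → ℕ) (P : Polynomial ℂ) : Prop :=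
  IsTypeIIStar μ n P ∧ P.eval 0 = 1

/-- `Λ_n`: the type I vector normalized by `∑_j ⟨Λ_{n,j}, z^{|n|−1}⟩_j = 1`. -/
def IsLambda {r : ℕ} (μ : Fin r → Measure ℂ) (n : Fin r → ℕ) (L : Fin r → Polynomial ℂ) : Prop :=
  IsTypeI μ n L ∧ ∑ j, mip (μ j) (L j) ((∑ i, n i) - 1) = 1

/-- `Λ*_n`: the type I* vector normalized by `∑_j ⟨Λ*_{n,j}, 1⟩_j = 1`. -/
def IsLambdaStar {r : ℕ} (μ : Fin r → Measure ℂ) (n : Fin r → ℕ) (L : Fin r → Polynomial ℂ) : Prop :=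
  IsTypeIStar μ n L ∧ ∑ j, mip (μ j) (L j) 0 = 1

/-- The multi-index `n + e_k`. -/
def eAdd {r : ℕ} (n : Fin r → ℕ) (k : Fin r) : Fin r → ℕ :=
  Function.update n k (n k + 1)

/-- The multi-index `n − e_k` (used only when `n k ≥ 1`). -/
def eSub {r : ℕ} (n : Fin r → ℕ) (k : Fin r) : Fin r → ℕ :=
  Function.update n k (n k - 1)

/-! ### Auxiliary lemmas -/

section MeasAux
variable {μ : Measure ℂ} [IsProbabilityMeasure μ]
  (hsph : μ ((Metric.sphere (0 : ℂ) 1)ᶜ) = 0)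
include hsph

lemma ae_sphere : ∀ᵐ z ∂μ, ‖z‖ = 1 := by
  have h : ∀ᵐ z ∂μ, z ∈ Metric.sphere (0:ℂ) 1 := MeasureTheory.ae_iff.2 hsph
  filter_upwards [h] with z hz
  simpa [mem_sphere_zero_iff_norm] using hz

lemma integrable_aux (P : Polynomial ℂ) (p : ℕ) :
    Integrable (fun z => P.eval z * (starRingEnd ℂ) (z ^ p)) μ := by
  refine Integrable.mono' (g := fun _ => ∑ k ∈ Finset.range (P.natDegree + 1), ‖P.coeff k‖)
    (integrable_const _) ?_ ?_
  · exact ((P.continuous).mul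
      (Complex.continuous_conj.comp (continuous_pow p))).aestronglyMeasurable
  · filter_upwards [ae_sphere hsph] with z hz
    have h1 : ‖P.eval z‖ ≤ ∑ k ∈ Finset.range (P.natDegree + 1), ‖P.coeff k‖ := by
      rw [Polynomial.eval_eq_sum_range]
      refine le_trans (norm_sum_le _ _) (Finset.sum_le_sum fun k _ => ?_)
      simp [norm_mul, norm_pow, hz]
    calc ‖P.eval z * (starRingEnd ℂ) (z ^ p)‖ = ‖P.eval z‖ := by
          rw [norm_mul, RCLike.norm_conj, norm_pow, hz, one_pow, mul_one]
      _ ≤ _ := h1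

omit hsph in
lemma mip_def (P : Polynomial ℂ) (p : ℕ) :
    mip μ P p = ∫ z, P.eval z * (starRingEnd ℂ) (z ^ p) ∂μ := by
  simp [mip, pip]

lemma mip_sub (P Q : Polynomial ℂ) (p : ℕ) :
    mip μ (P - Q) p = mip μ P p - mip μ Q p := by
  rw [mip_def, mip_def, mip_def,
    ← integral_sub (integrable_aux hsph P p) (integrable_aux hsph Q p)]
  congr 1; ext z; simp [sub_mul]

lemma mip_C_mul (a : ℂ) (P : Polynomial ℂ) (p : ℕ) :
    mip μ (C a * P) p = a * mip μ P p := by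
  rw [mip_def, mip_def, ← integral_const_mul]
  congr 1; ext z; simp [mul_assoc]

lemma mip_X_mul (P : Polynomial ℂ) (p : ℕ) :
    mip μ (X * P) (p + 1) = mip μ P p := by
  rw [mip_def, mip_def]
  refine integral_congr_ae ?_
  filter_upwards [ae_sphere hsph] with z hz
  have hz1 : z * (starRingEnd ℂ) z = 1 := by
    rw [Complex.mul_conj, Complex.normSq_eq_norm_sq, hz]
    norm_num
  calc (X * P).eval z * (starRingEnd ℂ) (z ^ (p+1))
      = (z * (starRingEnd ℂ) z) * (P.eval z * (starRingEnd ℂ) (z ^ p)) := by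
        simp only [eval_mul, eval_X, pow_succ, map_mul]; ring
    _ = P.eval z * (starRingEnd ℂ) (z ^ p) := by rw [hz1, one_mul]

lemma mom_eq (k p : ℕ) :
    (∫ z, z ^ k * (starRingEnd ℂ) (z ^ p) ∂μ) = mom μ ((k : ℤ) - p) := by
  unfold mom
  refine integral_congr_ae ?_
  filter_upwards [ae_sphere hsph] with z hz
  have hz0 : z ≠ 0 := by rintro rfl; simp at hz
  have hcz : (starRingEnd ℂ) z = z⁻¹ := (Complex.inv_eq_conj hz).symm
  rw [map_pow, hcz, zpow_sub₀ hz0, zpow_natCast, zpow_natCast, div_eq_mul_inv, inv_pow]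

lemma mip_eq_sum (P : Polynomial ℂ) (p d : ℕ) (hd : P.natDegree ≤ d) :
    mip μ P p = ∑ k ∈ Finset.range (d + 1), P.coeff k * mom μ ((k : ℤ) - p) := by
  rw [mip_def]
  have heval : ∀ z : ℂ, P.eval z * (starRingEnd ℂ) (z ^ p)
      = ∑ k ∈ Finset.range (d + 1), P.coeff k * (z ^ k * (starRingEnd ℂ) (z ^ p)) := by
    intro z
    rw [Polynomial.eval_eq_sum_range' (Nat.lt_succ_of_le hd), Finset.sum_mul]
    exact Finset.sum_congr rfl fun k _ => by ring
  calc (∫ z, P.eval z * (starRingEnd ℂ) (z ^ p) ∂μ)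
      = ∫ z, ∑ k ∈ Finset.range (d + 1), P.coeff k * (z ^ k * (starRingEnd ℂ) (z ^ p)) ∂μ :=
        integral_congr_ae (Filter.Eventually.of_forall heval)
    _ = ∑ k ∈ Finset.range (d + 1), ∫ z, P.coeff k * (z ^ k * (starRingEnd ℂ) (z ^ p)) ∂μ := by
        refine integral_finset_sum _ fun k _ => ?_
        have := (integrable_aux hsph (X ^ k) p).const_mul (P.coeff k)
        simpa using this
    _ = ∑ k ∈ Finset.range (d + 1), P.coeff k * mom μ ((k : ℤ) - p) := by
        refine Finset.sum_congr rfl fun k _ => ?_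
        rw [integral_const_mul, mom_eq hsph]

end MeasAux

section LinAux
variable {r : ℕ} (n : Fin r → ℕ)

lemma off_mono {j j' : Fin r} (h : j < j') :
    (∑ i ∈ Finset.univ.filter (fun i => i < j), n i) + n j
      ≤ ∑ i ∈ Finset.univ.filter (fun i => i < j'), n i := by
  have hsub : insert j (Finset.univ.filter (fun i => i < j))
      ⊆ Finset.univ.filter (fun i => i < j') := by
    intro i hi
    rcases Finset.mem_insert.1 hi with rfl | hi
    · simp [h]
    · simp only [Finset.mem_filter, Finset.mem_univ, true_and] at hi ⊢
      exact lt_trans hi h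
  have h2 := Finset.sum_le_sum_of_subset hsub (f := n)
  rw [Finset.sum_insert (by simp)] at h2
  omega

lemma linIdx_lt (c : (j : Fin r) × Fin (n j)) : linIdx n c < ∑ i, n i := by
  have h1 : linIdx n c < (∑ i ∈ Finset.univ.filter (fun i => i < c.1), n i) + n c.1 :=
    Nat.add_lt_add_left c.2.2 _
  refine lt_of_lt_of_le h1 ?_
  have h2 := Finset.sum_le_sum_of_subset
    (Finset.subset_univ (insert c.1 (Finset.univ.filter (fun i => i < c.1)))) (f := n)
  rw [Finset.sum_insert (by simp)] at h2
  omega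

lemma linIdx_injective : Function.Injective (linIdx n) := by
  rintro ⟨j, q⟩ ⟨j', q'⟩ h
  unfold linIdx at h
  dsimp only at h
  rcases lt_trichotomy j j' with hlt | heq | hgt
  · exfalso
    have h1 := off_mono n hlt
    have h2 : (q : ℕ) < n j := q.2
    omega
  · subst heq
    have : (q : ℕ) = (q' : ℕ) := by omega
    simp [Fin.ext_iff, this]
  · exfalso
    have h1 := off_mono n hgt
    have h2 : (q' : ℕ) < n j' := q'.2
    omega

lemma linIdx_image :
    Finset.image (linIdx n) Finset.univ = Finset.range (∑ i, n i) := by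
  apply Finset.eq_of_subset_of_card_le
  · intro p hp
    rcases Finset.mem_image.1 hp with ⟨c, _, rfl⟩
    exact Finset.mem_range.2 (linIdx_lt n c)
  · rw [Finset.card_range, Finset.card_image_of_injective _ (linIdx_injective n),
      Finset.card_univ, Fintype.card_sigma]
    simp

lemma sum_linIdx {M : Type*} [AddCommMonoid M] (f : ℕ → M) :
    ∑ c : (j : Fin r) × Fin (n j), f (linIdx n c) = ∑ p ∈ Finset.range (∑ i, n i), f p := by
  rw [← linIdx_image n, Finset.sum_image (fun a _ b _ h => linIdx_injective n h)]

lemma linIdx_surj {p : ℕ} (hp : p < ∑ i, n i) : ∃ c, linIdx n c = p := by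
  have hmem : p ∈ Finset.image (linIdx n) Finset.univ := by
    rw [linIdx_image n]; exact Finset.mem_range.2 hp
  rcases Finset.mem_image.1 hmem with ⟨c, _, hc⟩
  exact ⟨c, hc⟩

end LinAux

/-- Kernel lemma: a polynomial of degree `< |m|` satisfying the type II orthogonality
conditions for a normal index `m` is zero. -/
lemma poly_eq_zero_of_normal {r : ℕ} (μ : Fin r → Measure ℂ)
    (hprob : ∀ i, IsProbabilityMeasure (μ i))
    (hsph : ∀ i, μ i ((Metric.sphere (0 : ℂ) 1)ᶜ) = 0)
    (m : Fin r → ℕ) (hnorm : NormalIndex μ m) (Q : Polynomial ℂ)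
    (hdeg : ∀ p, (∑ i, m i) ≤ p → Q.coeff p = 0)
    (horth : ∀ i, ∀ s : ℕ, s < m i → mip (μ i) Q s = 0) : Q = 0 := by
  classical
  have hsum : ∀ i (s : ℕ), mip (μ i) Q s
      = ∑ k ∈ Finset.range (∑ i, m i), Q.coeff k * mom (μ i) ((k : ℤ) - s) := by
    intro i s
    haveI := hprob i
    rw [mip_eq_sum (hsph i) Q s (max Q.natDegree (∑ i, m i)) (le_max_left _ _)]
    symm
    apply Finset.sum_subset
    · exact Finset.range_subset_range.2 (le_trans (le_max_right _ _) (Nat.le_succ _))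
    · intro k _ hk
      have hNk : (∑ i, m i) ≤ k := le_of_not_gt (fun h => hk (Finset.mem_range.2 h))
      rw [hdeg k hNk, zero_mul]
  have hx : Matrix.mulVec (Mmat μ m) (fun c => Q.coeff (linIdx m c)) = 0 := by
    funext rq
    obtain ⟨i, s⟩ := rq
    have h0 := horth i (s : ℕ) s.2
    rw [hsum i (s : ℕ)] at h0
    have hcomm : ∀ c : (j : Fin r) × Fin (m j),
        Mmat μ m ⟨i, s⟩ c * Q.coeff (linIdx m c)
          = (fun p => Q.coeff p * mom (μ i) ((p : ℤ) - ((s : ℕ) : ℤ))) (linIdx m c) := by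
      intro c
      simp only [Mmat, Matrix.of_apply]
      ring
    calc Matrix.mulVec (Mmat μ m) (fun c => Q.coeff (linIdx m c)) ⟨i, s⟩
        = ∑ c : (j : Fin r) × Fin (m j), Mmat μ m ⟨i, s⟩ c * Q.coeff (linIdx m c) := by
          simp [Matrix.mulVec, dotProduct]
      _ = ∑ c : (j : Fin r) × Fin (m j),
            (fun p => Q.coeff p * mom (μ i) ((p : ℤ) - ((s : ℕ) : ℤ))) (linIdx m c) :=
          Finset.sum_congr rfl fun c _ => hcomm c
      _ = ∑ p ∈ Finset.range (∑ i, m i), Q.coeff p * mom (μ i) ((p : ℤ) - ((s : ℕ) : ℤ)) := by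
          simpa using sum_linIdx m (fun p => Q.coeff p * mom (μ i) ((p : ℤ) - ((s : ℕ) : ℤ)))
      _ = 0 := h0
  have hker := Matrix.eq_zero_of_mulVec_eq_zero hnorm hx
  ext p
  rw [Polynomial.coeff_zero]
  by_cases hp : p < ∑ i, m i
  · rcases linIdx_surj m hp with ⟨c, rfl⟩
    exact congrFun hker c
  · exact hdeg p (le_of_not_gt hp)

/-- if every `n j ≥ 1`, all of `n, n−e_1, …, n−e_r` are normal, and
`β_n ≠ 0`, then for every `j`:
`β_n (Φ_n − z Φ_{n−e_j}) = Φ*_{n−e_j} − ∑_k ρ_{n,k} Φ*_{n−e_k}`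
(the `j`-th row of the matrix identity with `A_n = (1/β_n)(I − R_n)`). -/
theorem szego_recurrence_matrix_form (r : ℕ) (hr : 0 < r) (μ : Fin r → Measure ℂ)
    (hμ : MopucSystem μ) (n : Fin r → ℕ) (hpos : ∀ j, 1 ≤ n j)
    (hnorm : NormalIndex μ n)
    (hnorm' : ∀ j, NormalIndex μ (eSub n j))
    (Φ : Polynomial ℂ) (hΦ : IsPhi μ n Φ)
    (Φs : Polynomial ℂ) (hΦs : IsPhiStar μ n Φs)
    (Φ' : Fin r → Polynomial ℂ) (hΦ' : ∀ j, IsPhi μ (eSub n j) (Φ' j))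
    (Φs' : Fin r → Polynomial ℂ) (hΦs' : ∀ j, IsPhiStar μ (eSub n j) (Φs' j))
    (ρ : Fin r → ℂ)
    (hρ : Φ = C (Φ.eval 0) * Φs + ∑ j, C (ρ j) * (X * Φ' j))
    (hβ : Φs.coeff (∑ j, n j) ≠ 0) :
    ∀ j, C (Φs.coeff (∑ i, n i)) * (Φ - X * Φ' j)
      = Φs' j - ∑ k, C (ρ k) * Φs' k := by
  classical
  have hprob : ∀ i, IsProbabilityMeasure (μ i) := fun i => (hμ i).1
  have hsph : ∀ i, μ i ((Metric.sphere (0 : ℂ) 1)ᶜ) = 0 := fun i => (hμ i).2.1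
  set N := ∑ j, n j with hNdef
  set β := Φs.coeff N with hβdef
  set α := Φ.eval 0 with hαdef
  obtain ⟨j0⟩ : Nonempty (Fin r) := ⟨⟨0, hr⟩⟩
  have hN1 : 1 ≤ N := le_trans (hpos j0)
    (Finset.single_le_sum (fun i _ => Nat.zero_le _) (Finset.mem_univ j0))
  have hsumsub : ∀ k, ∑ i, eSub n k i = N - 1 := by
    intro k
    have h1 : ∑ i, eSub n k i = (n k - 1) + ∑ i ∈ Finset.univ.erase k, n i := by
      unfold eSub; rw [Finset.sum_update_of_mem (Finset.mem_univ k), ← Finset.erase_eq]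
    have h2 : n k + ∑ i ∈ Finset.univ.erase k, n i = N :=
      Finset.add_sum_erase _ _ (Finset.mem_univ k)
    have := hpos k
    omega
  have hmle : ∀ k i, eSub n k i ≤ n i := by
    intro k i
    simp only [eSub, Function.update_apply]
    split_ifs with h
    · subst h; omega
    · exact le_refl _
  have hmonic : Φ.Monic := hΦ.2.1
  have hΦdeg : Φ.natDegree = N := hΦ.2.2
  have hΦ'deg : ∀ k, (Φ' k).natDegree = N - 1 := fun k => (hΦ' k).2.2.trans (hsumsub k)
  have hΦ'monic : ∀ k, (Φ' k).Monic := fun k => (hΦ' k).2.1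
  have hΦscoeff : ∀ p, N < p → Φs.coeff p = 0 := fun p hp =>
    Polynomial.coeff_eq_zero_of_natDegree_lt
      (lt_of_le_of_lt (Polynomial.natDegree_le_iff_degree_le.2 hΦs.1.2.1) hp)
  have hΦs'ndeg : ∀ k, (Φs' k).natDegree ≤ N - 1 := fun k =>
    Polynomial.natDegree_le_iff_degree_le.2
      ((hΦs' k).1.2.1.trans (le_of_eq (by rw [hsumsub k])))
  -- coefficient identity from hρ at degree N
  have hXk : ∀ k, (X * Φ' k).coeff N = 1 := by
    intro k
    have hN' : N = (N - 1) + 1 := by omega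
    rw [hN', Polynomial.coeff_X_mul]
    have h := (hΦ'monic k).coeff_natDegree
    rwa [hΦ'deg k] at h
  have hcoefId : α * β + ∑ k, ρ k = 1 := by
    have h := congrArg (fun q : Polynomial ℂ => q.coeff N) hρ
    simp only [Polynomial.coeff_add, Polynomial.coeff_C_mul, Polynomial.finset_sum_coeff] at h
    have hΦN : Φ.coeff N = 1 := by rw [← hΦdeg]; exact hmonic.coeff_natDegree
    rw [hΦN] at h
    simp only [hXk, mul_one] at h
    exact h.symm
  -- Lemma A: C β * (X * Φ' k) = Φs - Φs' k
  have lemA : ∀ k, C β * (X * Φ' k) = Φs - Φs' k := by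
    intro k
    have hmN : ∑ i, eSub n k i = N - 1 := hsumsub k
    set D := Φs - Φs' k with hD
    have hD0 : D.coeff 0 = 0 := by
      rw [hD, Polynomial.coeff_sub, Polynomial.coeff_zero_eq_eval_zero,
        Polynomial.coeff_zero_eq_eval_zero, hΦs.2, (hΦs' k).2, sub_self]
    have hXD : X * D.divX = D := by
      have h := Polynomial.X_mul_divX_add D
      rwa [hD0, Polynomial.C_0, add_zero] at h
    have hPcoeff : ∀ q, D.divX.coeff q = D.coeff (q + 1) := fun q => Polynomial.coeff_divX
    have hRzero : D.divX - C β * Φ' k = 0 := by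
      apply poly_eq_zero_of_normal μ hprob hsph (eSub n k) (hnorm' k)
      · intro p hp
        rw [hmN] at hp
        rw [Polynomial.coeff_sub, Polynomial.coeff_C_mul, hPcoeff]
        by_cases hpe : p = N - 1
        · subst hpe
          have h1 : D.coeff (N - 1 + 1) = β := by
            rw [hD, Polynomial.coeff_sub]
            have hNN : N - 1 + 1 = N := by omega
            rw [hNN]
            have h2 : (Φs' k).coeff N = 0 := Polynomial.coeff_eq_zero_of_natDegree_lt
              (lt_of_le_of_lt (hΦs'ndeg k) (by omega))
            rw [h2, sub_zero]
          have h3 : (Φ' k).coeff (N - 1) = 1 := by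
            have h := (hΦ'monic k).coeff_natDegree
            rwa [hΦ'deg k] at h
          rw [h1, h3, mul_one, sub_self]
        · have hplt : N - 1 < p := lt_of_le_of_ne hp (Ne.symm hpe)
          have h1 : D.coeff (p + 1) = 0 := by
            rw [hD, Polynomial.coeff_sub, hΦscoeff (p + 1) (by omega),
              Polynomial.coeff_eq_zero_of_natDegree_lt
                (lt_of_le_of_lt (hΦs'ndeg k) (by omega)), sub_zero]
          have h2 : (Φ' k).coeff p = 0 := Polynomial.coeff_eq_zero_of_natDegree_lt
            (by rw [hΦ'deg k]; omega)
          rw [h1, h2, mul_zero, sub_zero]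
      · intro i s hs
        haveI := hprob i
        rw [mip_sub (hsph i), mip_C_mul (hsph i)]
        have hΦ'orth : mip (μ i) (Φ' k) s = 0 := (hΦ' k).1.2.2 i s hs
        have hPorth : mip (μ i) D.divX s = 0 := by
          rw [← mip_X_mul (hsph i), hXD, hD, mip_sub (hsph i)]
          have h1 : mip (μ i) Φs (s + 1) = 0 :=
            hΦs.1.2.2 i (s + 1) (Nat.le_add_left 1 s)
              (le_trans (Nat.succ_le_of_lt hs) (hmle k i))
          have h2 : mip (μ i) (Φs' k) (s + 1) = 0 :=
            (hΦs' k).1.2.2 i (s + 1) (Nat.le_add_left 1 s) (Nat.succ_le_of_lt hs)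
          rw [h1, h2, sub_self]
        rw [hΦ'orth, hPorth, mul_zero, sub_zero]
    have hPeq : D.divX = C β * Φ' k := by
      have := sub_eq_zero.1 hRzero
      exact this
    calc C β * (X * Φ' k) = X * (C β * Φ' k) := by ring
      _ = X * D.divX := by rw [hPeq]
      _ = D := hXD
  -- conclusion
  have hkey : C (α * β) + ∑ k, C (ρ k) = 1 := by
    rw [← map_sum, ← Polynomial.C_add, hcoefId, Polynomial.C_1]
  have h2 : C β * Φ = Φs - ∑ k, C (ρ k) * Φs' k := by
    calc C β * Φ
        = C β * (C α * Φs) + ∑ k, C (ρ k) * (C β * (X * Φ' k)) := by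
          rw [hρ, mul_add, Finset.mul_sum]
          congr 1
          exact Finset.sum_congr rfl fun k _ => by ring
      _ = C β * (C α * Φs) + ∑ k, C (ρ k) * (Φs - Φs' k) := by
          refine congrArg _ (Finset.sum_congr rfl fun k _ => ?_)
          rw [lemA k]
      _ = C β * (C α * Φs)
            + ((∑ k, C (ρ k)) * Φs - ∑ k, C (ρ k) * Φs' k) := by
          congr 1
          rw [Finset.sum_mul, ← Finset.sum_sub_distrib]
          exact Finset.sum_congr rfl fun k _ => by ring
      _ = (C (α * β) + ∑ k, C (ρ k)) * Φs - ∑ k, C (ρ k) * Φs' k := by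
          rw [Polynomial.C_mul]; ring
      _ = Φs - ∑ k, C (ρ k) * Φs' k := by rw [hkey, one_mul]
  intro j
  calc C β * (Φ - X * Φ' j) = C β * Φ - C β * (X * Φ' j) := by ring
    _ = (Φs - ∑ k, C (ρ k) * Φs' k) - (Φs - Φs' j) := by rw [h2, lemA j]
    _ = Φs' j - ∑ k, C (ρ k) * Φs' k := by ring
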